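/- Let X be a real Banach space, x₀ ∈ X, R > 0, and let A satisfy the variable Lipschitz condition on B[x₀,R] with a continuous nonnegative function k on [0,R]. Set a = ‖A x₀ − x₀‖, a₊(r) = a + ∫₀^r k(t) dt, assume a₊ has a fixed point in [0,R], let r* be its smallest fixed point, and let x* be the fixed point of A obtained as the limit of x_{n+1} = A x_n starting from x₀. Let ξ₀ ∈ B[x₀,R] with ρ₀ = ‖ξ₀ − x₀‖, and assume either ρ₀ ≤ r*, or a₊(s) < s for all s with r* < s ≤ ρ₀. Then the successive approximations ξ_{n+1} = A ξ_n are well defined (all ξ_n lie in B[x₀,R]) and converge to x*. -/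

import Mathlib

/-!
Integrating the variable Lipschitz bound along the segment from `x` to `y`, on which the distance
to `x₀` grows at unit speed, shows: if `‖x - x₀‖ ≤ t` and `‖y - x‖ ≤ s - t`, then
`‖A x - x₀‖ ≤ a₊ t` and `‖A y - A x‖ ≤ a₊ s - a₊ t`. By induction `‖xₙ - x₀‖ ≤ a₊ⁿ 0` and
`‖ξₙ - xₙ‖ ≤ a₊ⁿ ρ₀ - a₊ⁿ 0`. As `a₊` is monotone, its orbit of `0` increases to the least fixed
point `r*`, and so does its orbit of `ρ₀`: squeezed below `r*` if `ρ₀ ≤ r*`, decreasing to a fixed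
point in `[r*, ρ₀]` otherwise. Hence `ξₙ - xₙ → 0`.
-/

open Set Filter Topology intervalIntegral

theorem sub_le_integral_of_sub_le_mul {f K : ℝ → ℝ} {t s : ℝ} (hts : t ≤ s)
    (hf : ContinuousOn f (Icc t s)) (hK : Continuous K)
    (h : ∀ u ∈ Ico t s, ∀ v ∈ Ioc u s, f v - f u ≤ K v * (v - u)) :
    f s - f t ≤ ∫ u in t..s, K u := by
  have hB : ∀ u, HasDerivAt (fun u => f t + ∫ w in t..u, K w) (K u) u := fun u =>
    (hK.integral_hasStrictDerivAt t u).hasDerivAt.const_add (f t)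
  suffices f s ≤ f t + ∫ w in t..s, K w by linarith
  refine image_le_of_liminf_slope_right_le_deriv_boundary hf (by simp)
    (fun u _ => (hB u).continuousAt.continuousWithinAt) (fun u _ => (hB u).hasDerivWithinAt)
    (fun u hu r hr => ?_) ⟨hts, le_rfl⟩
  have hKr : ∀ᶠ v in 𝓝[>] u, K v < r :=
    nhdsWithin_le_nhds (hK.continuousAt.eventually_lt continuousAt_const hr)
  refine (hKr.and (Ioc_mem_nhdsGT hu.2)).frequently.mono fun v ⟨hv, huv, hvs⟩ => ?_
  rw [slope_def_field, div_lt_iff₀ (sub_pos.2 huv)]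
  exact (h u hu v ⟨huv, hvs⟩).trans_lt (mul_lt_mul_of_pos_right hv (sub_pos.2 huv))

section Iterate

variable {α : Type*} [ConditionallyCompleteLinearOrder α] [TopologicalSpace α] [OrderTopology α]
  {F : α → α}

theorem Monotone.tendsto_iterate_of_le_map (hF : Monotone F) (hFc : Continuous F)
    {x r : α} (hx : x ≤ F x) (hxr : x ≤ r) (hfix : F r = r)
    (hmin : ∀ s ∈ Icc x r, F s = s → r ≤ s) :
    Tendsto (fun n => F^[n] x) atTop (𝓝 r) := by
  have hle : ∀ n, F^[n] x ≤ r := fun n => by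
    simpa [Function.iterate_fixed hfix] using hF.iterate n hxr
  have hbdd : BddAbove (range fun n => F^[n] x) := ⟨r, forall_mem_range.2 hle⟩
  have hlim := tendsto_atTop_ciSup (hF.monotone_iterate_of_le_map hx) hbdd
  set l := ⨆ n, F^[n] x
  have hl : F l = l := by
    refine tendsto_nhds_unique ((hFc.tendsto l).comp hlim) ?_
    simpa only [Function.comp_def, ← Function.iterate_succ_apply' F] using
      hlim.comp (tendsto_add_atTop_nat 1)
  have hlr : l ≤ r := ciSup_le hle
  rwa [le_antisymm hlr (hmin l ⟨le_ciSup hbdd 0, hlr⟩ hl)] at hlim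

theorem Monotone.tendsto_iterate_of_map_le (hF : Monotone F) (hFc : Continuous F)
    {x r : α} (hx : F x ≤ x) (hrx : r ≤ x) (hfix : F r = r)
    (hmax : ∀ s ∈ Icc r x, F s = s → s ≤ r) :
    Tendsto (fun n => F^[n] x) atTop (𝓝 r) :=
  Monotone.tendsto_iterate_of_le_map (α := αᵒᵈ) hF.dual hFc hx hrx hfix
    fun s hs => hmax s ⟨hs.2, hs.1⟩

theorem Monotone.tendsto_iterate_of_admissible (hF : Monotone F) (hFc : Continuous F)
    {b r ρ : α} (hb : b ≤ F b) (hbρ : b ≤ ρ) (hfix : F r = r)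
    (hmin : ∀ s ∈ Icc b r, F s = s → r ≤ s) (hadm : ρ ≤ r ∨ ∀ s, r < s → s ≤ ρ → F s < s) :
    Tendsto (fun n => F^[n] ρ) atTop (𝓝 r) := by
  rcases le_or_gt ρ r with hρr | hrρ
  · refine tendsto_of_tendsto_of_tendsto_of_le_of_le
      (hF.tendsto_iterate_of_le_map hFc hb (hbρ.trans hρr) hfix hmin) tendsto_const_nhds
      (fun n => hF.iterate n hbρ) fun n => ?_
    simpa [Function.iterate_fixed hfix] using hF.iterate n hρr
  · have hdec := hadm.resolve_left hrρ.not_ge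
    exact hF.tendsto_iterate_of_map_le hFc (hdec ρ hrρ le_rfl).le hrρ.le hfix
      fun s hs hFs => not_lt.1 fun hrs => (hdec s hrs hs.2).ne hFs

end Iterate

theorem Monotone.iterate_le_max_of_admissible {α : Type*} [LinearOrder α] {F : α → α}
    (hF : Monotone F) {r ρ : α} (hfix : F r = r)
    (hadm : ρ ≤ r ∨ ∀ s, r < s → s ≤ ρ → F s < s) (n : ℕ) : F^[n] ρ ≤ max ρ r := by
  have hmax : F (max ρ r) ≤ max ρ r := by
    rcases le_or_gt ρ r with hρr | hrρ
    · rw [max_eq_right hρr, hfix]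
    · rw [max_eq_left hrρ.le]
      exact (hadm.resolve_left hrρ.not_ge ρ hrρ le_rfl).le
  have hmaps : MapsTo F (Iic (max ρ r)) (Iic (max ρ r)) := fun _ hs => (hF hs).trans hmax
  exact hmaps.iterate n (le_max_left ρ r)

theorem ContinuousOn.exists_continuous_extension_Icc {α β : Type*} [LinearOrder α]
    [TopologicalSpace α] [OrderTopology α] [TopologicalSpace β] {f : α → β} {a b : α}
    (hab : a ≤ b) (hf : ContinuousOn f (Icc a b)) :
    ∃ g : α → β, Continuous g ∧ EqOn f g (Icc a b) ∧ ∀ x, ∃ y ∈ Icc a b, g x = f y :=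
  ⟨IccExtend hab ((Icc a b).domRestrict f), continuous_IccExtend_iff.2 hf.domRestrict,
    fun _ hx => (IccExtend_of_mem hab ((Icc a b).domRestrict f) hx).symm,
    fun x => ⟨_, (projIcc a b hab x).2, rfl⟩⟩

def VariableLipschitzOn {X : Type*} [NormedAddCommGroup X] (A : X → X) (x₀ : X) (R : ℝ)
    (k : ℝ → ℝ) : Prop :=
  ∀ x₁ x₂ : X, ∀ r : ℝ, ‖x₁ - x₀‖ ≤ r → ‖x₂ - x₀‖ ≤ r → 0 < r → r ≤ R →
    ‖A x₁ - A x₂‖ ≤ k r * ‖x₁ - x₂‖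

noncomputable def majorant {X : Type*} [NormedAddCommGroup X] (A : X → X) (x₀ : X)
    (k : ℝ → ℝ) (r : ℝ) : ℝ :=
  ‖A x₀ - x₀‖ + ∫ t in (0 : ℝ)..r, k t

section Majorant

variable {X : Type*} [NormedAddCommGroup X] {A : X → X} {x₀ : X} {k : ℝ → ℝ}

@[simp]
theorem majorant_zero : majorant A x₀ k 0 = ‖A x₀ - x₀‖ := by
  simp [majorant]

theorem majorant_sub (hk : Continuous k) (t s : ℝ) :
    majorant A x₀ k s - majorant A x₀ k t = ∫ u in t..s, k u := by
  simp only [majorant, add_sub_add_left_eq_sub]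
  exact integral_interval_sub_left (hk.intervalIntegrable _ _) (hk.intervalIntegrable _ _)

theorem monotone_majorant (hk : Continuous k) (hk0 : ∀ r, 0 ≤ k r) :
    Monotone (majorant A x₀ k) := fun t s hts =>
  sub_nonneg.1 <|
    majorant_sub (A := A) (x₀ := x₀) hk t s ▸ integral_nonneg hts fun u _ => hk0 u

theorem continuous_majorant (hk : Continuous k) : Continuous (majorant A x₀ k) :=
  continuous_const.add (continuous_primitive (fun _ _ => hk.intervalIntegrable _ _) 0)

theorem majorant_eqOn {R : ℝ} {K : ℝ → ℝ} (hkK : EqOn k K (Icc 0 R)) :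
    EqOn (majorant A x₀ k) (majorant A x₀ K) (Icc 0 R) := fun r hr => by
  refine congrArg _ (integral_congr fun u hu => hkK ?_)
  rw [uIcc_of_le hr.1] at hu
  exact ⟨hu.1, hu.2.trans hr.2⟩

end Majorant

namespace VariableLipschitzOn

variable {X : Type*} [NormedAddCommGroup X] {A : X → X} {x₀ : X} {R : ℝ} {k : ℝ → ℝ}

theorem congr (h : VariableLipschitzOn A x₀ R k) {K : ℝ → ℝ} (hkK : EqOn k K (Icc 0 R)) :
    VariableLipschitzOn A x₀ R K := fun x₁ x₂ r h₁ h₂ hr hrR =>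
  hkK ⟨hr.le, hrR⟩ ▸ h x₁ x₂ r h₁ h₂ hr hrR

theorem lipschitzOnWith_closedBall (h : VariableLipschitzOn A x₀ R k) (hR : 0 < R) :
    LipschitzOnWith (k R).toNNReal A (Metric.closedBall x₀ R) :=
  .of_dist_le' fun x hx y hy => by
    simpa only [dist_eq_norm] using
      h x y R (mem_closedBall_iff_norm.1 hx) (mem_closedBall_iff_norm.1 hy) hR le_rfl

variable (hR : 0 < R) (hk : Continuous k) (hk0 : ∀ r ∈ Icc 0 R, 0 ≤ k r)
include hR hk hk0

theorem norm_sub_le_integral_of_path (h : VariableLipschitzOn A x₀ R k) {γ : ℝ → X} {t s : ℝ}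
    (ht : 0 ≤ t) (hts : t ≤ s) (hs : s ≤ R) (hγt : ‖γ t - x₀‖ ≤ t)
    (hγ : LipschitzOnWith 1 γ (Icc t s)) :
    ‖A (γ s) - A (γ t)‖ ≤ ∫ u in t..s, k u := by
  have hdist : ∀ u ∈ Icc t s, ∀ v ∈ Icc t s, u ≤ v → ‖γ v - γ u‖ ≤ v - u :=
    fun u hu v hv huv => by
    simpa [dist_eq_norm, abs_of_nonneg (sub_nonneg.2 huv)] using hγ.dist_le_mul v hv u hu
  have hrad : ∀ u ∈ Icc t s, ‖γ u - x₀‖ ≤ u := fun u hu =>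
    calc ‖γ u - x₀‖ ≤ ‖γ u - γ t‖ + ‖γ t - x₀‖ := norm_sub_le_norm_sub_add_norm_sub _ _ _
      _ ≤ (u - t) + t := add_le_add (hdist t ⟨le_rfl, hts⟩ u hu hu.1) hγt
      _ = u := by ring
  have hball : MapsTo γ (Icc t s) (Metric.closedBall x₀ R) := fun u hu =>
    mem_closedBall_iff_norm.2 ((hrad u hu).trans (hu.2.trans hs))
  have hcont : ContinuousOn (fun u => ‖A (γ u) - A (γ t)‖) (Icc t s) :=
    (((h.lipschitzOnWith_closedBall hR).continuousOn.comp hγ.continuousOn hball).sub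
      continuousOn_const).norm
  have := sub_le_integral_of_sub_le_mul hts hcont hk fun u hu v hv => by
    have hu' : u ∈ Icc t s := Ico_subset_Icc_self hu
    have hv' : v ∈ Icc t s := ⟨hu.1.trans hv.1.le, hv.2⟩
    calc ‖A (γ v) - A (γ t)‖ - ‖A (γ u) - A (γ t)‖ ≤ ‖A (γ v) - A (γ u)‖ := by
          simpa only [sub_sub_sub_cancel_right] using
            norm_sub_norm_le (A (γ v) - A (γ t)) (A (γ u) - A (γ t))
      _ ≤ k v * ‖γ v - γ u‖ := h _ _ v (hrad v hv') ((hrad u hu').trans hv.1.le)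
          (ht.trans_lt (hu.1.trans_lt hv.1)) (hv.2.trans hs)
      _ ≤ k v * (v - u) := mul_le_mul_of_nonneg_left (hdist u hu' v hv' hv.1.le)
          (hk0 v ⟨ht.trans hv'.1, hv.2.trans hs⟩)
  simpa using this

theorem norm_sub_le_integral [NormedSpace ℝ X] (h : VariableLipschitzOn A x₀ R k) {x y : X}
    {t s : ℝ} (ht : 0 ≤ t) (hs : s ≤ R) (hx : ‖x - x₀‖ ≤ t) (hxy : ‖y - x‖ ≤ s - t) :
    ‖A y - A x‖ ≤ ∫ u in t..s, k u := by
  have hts : t ≤ s := sub_nonneg.1 ((norm_nonneg _).trans hxy)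
  rcases hts.eq_or_lt with rfl | hlt
  · have : y = x := sub_eq_zero.1 (norm_le_zero_iff.1 (by simpa using hxy))
    simp [this]
  have hst : 0 < s - t := sub_pos.2 hlt
  set γ : ℝ → X := fun u => x + ((u - t) / (s - t)) • (y - x)
  have hγt : γ t = x := by simp [γ]
  have hγs : γ s = y := by simp [γ, div_self hst.ne']
  have hγ : LipschitzWith 1 γ := .of_dist_le_mul fun u v => by
    have : γ u - γ v = ((u - v) / (s - t)) • (y - x) := by
      simp only [γ, add_sub_add_left_eq_sub, ← sub_smul, sub_div, sub_sub_sub_cancel_right]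
    rw [dist_eq_norm, this, norm_smul, Real.norm_eq_abs, abs_div, abs_of_pos hst,
      NNReal.coe_one, one_mul, Real.dist_eq]
    calc |u - v| / (s - t) * ‖y - x‖ ≤ |u - v| / (s - t) * (s - t) := by gcongr
      _ = |u - v| := div_mul_cancel₀ _ hst.ne'
  simpa [hγt, hγs] using
    h.norm_sub_le_integral_of_path hR hk hk0 ht hts hs (hγt ▸ hx) hγ.lipschitzOnWith

theorem majorant_step [NormedSpace ℝ X] (h : VariableLipschitzOn A x₀ R k) {x y : X}
    {t s : ℝ} (ht : 0 ≤ t) (hs : s ≤ R) (hx : ‖x - x₀‖ ≤ t) (hxy : ‖y - x‖ ≤ s - t) :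
    ‖A x - x₀‖ ≤ majorant A x₀ k t ∧ ‖A y - A x‖ ≤ majorant A x₀ k s - majorant A x₀ k t := by
  have htR : t ≤ R := (sub_nonneg.1 ((norm_nonneg _).trans hxy)).trans hs
  refine ⟨?_, majorant_sub (A := A) (x₀ := x₀) hk t s ▸
    h.norm_sub_le_integral hR hk hk0 ht hs hx hxy⟩
  calc ‖A x - x₀‖ ≤ ‖A x - A x₀‖ + ‖A x₀ - x₀‖ := norm_sub_le_norm_sub_add_norm_sub _ _ _
    _ ≤ (∫ u in (0 : ℝ)..t, k u) + ‖A x₀ - x₀‖ :=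
        add_le_add_left
          (h.norm_sub_le_integral hR hk hk0 le_rfl htR (by simp) (by simpa using hx)) _
    _ = majorant A x₀ k t := add_comm _ _

theorem norm_sub_le_iterate_majorant [NormedSpace ℝ X] (h : VariableLipschitzOn A x₀ R k)
    {x ξ : ℕ → X} (hx0 : x 0 = x₀) (hx : ∀ n, x (n + 1) = A (x n))
    (hξ : ∀ n, ξ (n + 1) = A (ξ n)) {ρ : ℝ} (hρ : ‖ξ 0 - x₀‖ ≤ ρ)
    (hρR : ∀ n, (majorant A x₀ k)^[n] ρ ≤ R) (n : ℕ) :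
    ‖x n - x₀‖ ≤ (majorant A x₀ k)^[n] 0 ∧
      ‖ξ n - x n‖ ≤ (majorant A x₀ k)^[n] ρ - (majorant A x₀ k)^[n] 0 := by
  induction n with
  | zero => simpa [hx0] using hρ
  | succ n ih =>
    rw [hx, hξ, Function.iterate_succ_apply', Function.iterate_succ_apply']
    exact h.majorant_step hR hk hk0 ((norm_nonneg _).trans ih.1) (hρR n) ih.1 ih.2

end VariableLipschitzOn

theorem successive_approximations_general_initial_point_general
    {X : Type*} [NormedAddCommGroup X] [NormedSpace ℝ X]
    (x₀ : X) (R : ℝ) (hR : 0 < R) (A : X → X) (k : ℝ → ℝ)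
    (hk_cont : ContinuousOn k (Set.Icc 0 R))
    (hk_nonneg : ∀ t ∈ Set.Icc (0 : ℝ) R, 0 ≤ k t)
    (hLip : ∀ x₁ x₂ : X, ∀ r : ℝ, ‖x₁ - x₀‖ ≤ r → ‖x₂ - x₀‖ ≤ r →
      0 < r → r ≤ R → ‖A x₁ - A x₂‖ ≤ k r * ‖x₁ - x₂‖)
    (a : ℝ) (ha : a = ‖A x₀ - x₀‖)
    (aplus : ℝ → ℝ) (haplus : ∀ r : ℝ, aplus r = a + ∫ t in (0 : ℝ)..r, k t)
    (rstar : ℝ) (hrstar_mem : rstar ∈ Set.Icc (0 : ℝ) R)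
    (hrstar_fix : aplus rstar = rstar)
    (hrstar_min : ∀ s ∈ Set.Icc (0 : ℝ) R, aplus s = s → rstar ≤ s)
    (x : ℕ → X) (hx0 : x 0 = x₀) (hx_succ : ∀ n : ℕ, x (n + 1) = A (x n))
    (xstar : X) (hxstar_lim : Filter.Tendsto x Filter.atTop (nhds xstar))
    (ξ : ℕ → X) (hξ0 : ‖ξ 0 - x₀‖ ≤ R) (hξ_succ : ∀ n : ℕ, ξ (n + 1) = A (ξ n))
    (ρ₀ : ℝ) (hρ₀ : ρ₀ = ‖ξ 0 - x₀‖)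
    (hadm : ρ₀ ≤ rstar ∨ ∀ s : ℝ, rstar < s → s ≤ ρ₀ → aplus s < s) :
    (∀ n : ℕ, ‖ξ n - x₀‖ ≤ R) ∧
      Filter.Tendsto ξ Filter.atTop (nhds xstar) := by
  obtain ⟨hr0, hrR⟩ := hrstar_mem
  obtain rfl : aplus = majorant A x₀ k := funext fun r => by rw [haplus, ha, majorant]
  -- extending `k` continuously makes the majorant monotone and continuous on all of `ℝ`
  obtain ⟨K, hK, hkK, hK_val⟩ := hk_cont.exists_continuous_extension_Icc hR.le
  have hK0 : ∀ r, 0 ≤ K r := fun r => by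
    obtain ⟨y, hy, hKy⟩ := hK_val r
    exact hKy ▸ hk_nonneg y hy
  set F := majorant A x₀ K
  have hF : Monotone F := monotone_majorant hK hK0
  have hFk : EqOn (majorant A x₀ k) F (Icc 0 R) := majorant_eqOn hkK
  have hρR : ρ₀ ≤ R := hρ₀ ▸ hξ0
  have hfix : F rstar = rstar := (hFk ⟨hr0, hrR⟩).symm.trans hrstar_fix
  have hmin : ∀ s ∈ Icc 0 rstar, F s = s → rstar ≤ s := fun s hs =>
    hFk ⟨hs.1, hs.2.trans hrR⟩ ▸ hrstar_min s ⟨hs.1, hs.2.trans hrR⟩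
  have hadm' : ρ₀ ≤ rstar ∨ ∀ s, rstar < s → s ≤ ρ₀ → F s < s :=
    hadm.imp_right fun h s hrs hsρ => hFk ⟨hr0.trans hrs.le, hsρ.trans hρR⟩ ▸ h s hrs hsρ
  have hF0 : 0 ≤ F 0 := by simp [F]
  have hT := hF.tendsto_iterate_of_admissible (continuous_majorant hK) hF0 le_rfl hfix hmin
    (.inl hr0)
  have hS := hF.tendsto_iterate_of_admissible (continuous_majorant hK) hF0
    (hρ₀ ▸ norm_nonneg _) hfix hmin hadm'
  have hSR : ∀ n, F^[n] ρ₀ ≤ R := fun n =>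
    (hF.iterate_le_max_of_admissible hfix hadm' n).trans (max_le hρR hrR)
  have hmaj := (VariableLipschitzOn.congr hLip hkK).norm_sub_le_iterate_majorant hR hK
    (fun r _ => hK0 r) hx0 hx_succ hξ_succ hρ₀.ge hSR
  refine ⟨fun n => (norm_sub_le_norm_sub_add_norm_sub _ (x n) _).trans
    (by linarith [hmaj n, hSR n]), ?_⟩
  have hdiff : Tendsto (fun n => ξ n - x n) atTop (𝓝 0) :=
    squeeze_zero_norm (fun n => (hmaj n).2) (by simpa using hS.sub hT)
  simpa using hdiff.add hxstar_lim

/-- Successive approximations `ξ_{n+1} = A ξ_n` starting from any admissible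
initial point `ξ₀ ∈ B[x₀,R]` (with `ρ₀ = ‖ξ₀ - x₀‖ ≤ r*` or `a₊(s) < s`
for `r* < s ≤ ρ₀`) stay in `B[x₀,R]` and converge to the fixed point `x*`. -/
theorem successive_approximations_general_initial_point
    {X : Type*} [NormedAddCommGroup X] [NormedSpace ℝ X] [CompleteSpace X]
    (x₀ : X) (R : ℝ) (hR : 0 < R) (A : X → X) (k : ℝ → ℝ)
    (hk_cont : ContinuousOn k (Set.Icc 0 R))
    (hk_nonneg : ∀ t ∈ Set.Icc (0 : ℝ) R, 0 ≤ k t)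
    (hLip : ∀ x₁ x₂ : X, ∀ r : ℝ, ‖x₁ - x₀‖ ≤ r → ‖x₂ - x₀‖ ≤ r →
      0 < r → r ≤ R → ‖A x₁ - A x₂‖ ≤ k r * ‖x₁ - x₂‖)
    (a : ℝ) (ha : a = ‖A x₀ - x₀‖)
    (aplus : ℝ → ℝ) (haplus : ∀ r : ℝ, aplus r = a + ∫ t in (0 : ℝ)..r, k t)
    (rstar : ℝ) (hrstar_mem : rstar ∈ Set.Icc (0 : ℝ) R)
    (hrstar_fix : aplus rstar = rstar)
    (hrstar_min : ∀ s ∈ Set.Icc (0 : ℝ) R, aplus s = s → rstar ≤ s)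
    (x : ℕ → X) (hx0 : x 0 = x₀) (hx_succ : ∀ n : ℕ, x (n + 1) = A (x n))
    (xstar : X) (hxstar_lim : Filter.Tendsto x Filter.atTop (nhds xstar))
    (hxstar_fix : A xstar = xstar)
    (ξ : ℕ → X) (hξ0 : ‖ξ 0 - x₀‖ ≤ R) (hξ_succ : ∀ n : ℕ, ξ (n + 1) = A (ξ n))
    (ρ₀ : ℝ) (hρ₀ : ρ₀ = ‖ξ 0 - x₀‖)
    (hadm : ρ₀ ≤ rstar ∨ ∀ s : ℝ, rstar < s → s ≤ ρ₀ → aplus s < s) :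
    (∀ n : ℕ, ‖ξ n - x₀‖ ≤ R) ∧
      Filter.Tendsto ξ Filter.atTop (nhds xstar) :=
  successive_approximations_general_initial_point_general x₀ R hR A k hk_cont hk_nonneg hLip a ha
    aplus haplus rstar hrstar_mem hrstar_fix hrstar_min x hx0 hx_succ xstar hxstar_lim ξ hξ0 hξ_succ
    ρ₀ hρ₀ hadm
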